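/- arXiv:1509.01221 — 11 statements merged into one kernel-verified Lean document; each statement's English description precedes it below -/
import Mathlib

section
/- Let Δ be a positive integer. If p is a Δ-period of a word v (i.e., a period of v divisible by Δ) and |v| ≥ 2p, then p is divisible by p_Δ(v), the minimal Δ-period of v. Moreover p_Δ(v) = lcm(per(v), Δ). -/
/-- `p` is a period of the segment `w[a..b]` (positions inclusive, 1-based):
`0 < p`, `p` is at most the length `b - a + 1`, and letters at distance `p`
inside the segment coincide. -/
def SegPeriod {β : Type*} (w : ℕ → β) (a b p : ℕ) : Prop :=
  0 < p ∧ a + p ≤ b + 1 ∧ ∀ t, a ≤ t → t + p ≤ b → w t = w (t + p)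

lemma segPeriod_add {β : Type*} {w : ℕ → β} {n p q : ℕ}
    (hp : SegPeriod w 1 n p) (hq : SegPeriod w 1 n q) (h : p + q ≤ n) :
    SegPeriod w 1 n (p + q) := by
  obtain ⟨hp0, hpl, hpe⟩ := hp
  obtain ⟨hq0, hql, hqe⟩ := hq
  refine ⟨by omega, by omega, fun t ht htn => ?_⟩
  rw [hpe t ht (by omega), ← Nat.add_assoc]
  exact hqe (t + p) (by omega) (by omega)

lemma segPeriod_sub {β : Type*} {w : ℕ → β} {n p q : ℕ}
    (hp : SegPeriod w 1 n p) (hq : SegPeriod w 1 n q)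
    (hlt : q < p) (h : p + q ≤ n) : SegPeriod w 1 n (p - q) := by
  obtain ⟨hp0, hpl, hpe⟩ := hp
  obtain ⟨hq0, hql, hqe⟩ := hq
  refine ⟨by omega, by omega, fun t ht htn => ?_⟩
  by_cases hc : t + p ≤ n
  · have h1 := hpe t ht hc
    have h2 := hqe (t + (p - q)) (by omega) (by omega)
    have e1 : t + (p - q) + q = t + p := by omega
    rw [e1] at h2
    rw [h1, ← h2]
  · have h1 := hqe (t - q) (by omega) (by omega)
    have h2 := hpe (t - q) (by omega) (by omega)
    have e1 : t - q + q = t := by omega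
    have e2 : t - q + p = t + (p - q) := by omega
    rw [e1] at h1
    rw [e2] at h2
    rw [← h1, h2]

lemma per_dvd_of_two_mul {β : Type*} {w : ℕ → β} {n per : ℕ}
    (hper : SegPeriod w 1 n per) (hmin : ∀ r, SegPeriod w 1 n r → per ≤ r) :
    ∀ p, SegPeriod w 1 n p → 2 * p ≤ n → per ∣ p := by
  intro p
  induction p using Nat.strong_induction_on with
  | _ p ih =>
    intro hp hlen
    have hle := hmin p hp
    rcases eq_or_lt_of_le hle with he | hlt
    · exact he ▸ dvd_refl per
    · have hper0 := hper.1
      have hp0 := hp.1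
      have hsub := segPeriod_sub hp hper hlt (by omega)
      have hd := ih (p - per) (by omega) hsub (by omega)
      have : per ∣ (p - per) + per := Dvd.dvd.add hd (dvd_refl per)
      rwa [Nat.sub_add_cancel hle] at this

lemma segPeriod_mul {β : Type*} {w : ℕ → β} {n per : ℕ}
    (hper : SegPeriod w 1 n per) :
    ∀ k, 0 < k → k * per ≤ n → SegPeriod w 1 n (k * per) := by
  intro k
  induction k with
  | zero => omega
  | succ k ih =>
    intro _ hle
    rcases Nat.eq_zero_or_pos k with hk | hk
    · subst hk; simpa using hper
    · have hper0 := hper.1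
      have hsm : (k + 1) * per = k * per + per := Nat.succ_mul k per
      have := segPeriod_add (ih hk (by omega)) hper (by omega)
      simpa [Nat.succ_mul] using this

/-- If `p` is a `Δ`-period of the word `v = w[1..n]` (a period divisible by `Δ`)
with `|v| ≥ 2p`, then `p` is divisible by the minimal `Δ`-period `pΔ` of `v`,
and moreover `pΔ = lcm(per(v), Δ)` where `per` is the smallest period of `v`. -/
theorem stmt1 {β : Type*} (w : ℕ → β) (n Δ p per pΔ : ℕ) (hΔ : 0 < Δ)
    (hp : SegPeriod w 1 n p) (hdvd : Δ ∣ p) (hlen : 2 * p ≤ n)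
    (hper : SegPeriod w 1 n per) (hpermin : ∀ r, SegPeriod w 1 n r → per ≤ r)
    (hpΔ : SegPeriod w 1 n pΔ) (hpΔdvd : Δ ∣ pΔ)
    (hpΔmin : ∀ r, SegPeriod w 1 n r → Δ ∣ r → pΔ ≤ r) :
    pΔ ∣ p ∧ pΔ = Nat.lcm per Δ := by
  have hp0 := hp.1
  have hper0 := hper.1
  have hpΔ0 := hpΔ.1
  have hperdvd : per ∣ p := per_dvd_of_two_mul hper hpermin p hp hlen
  have hlcmdvd : Nat.lcm per Δ ∣ p := Nat.lcm_dvd hperdvd hdvd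
  have hlcmle : Nat.lcm per Δ ≤ p := Nat.le_of_dvd hp0 hlcmdvd
  have hpn : p ≤ n := by have := hp.2.1; omega
  -- lcm is a Δ-period
  obtain ⟨k, hk⟩ := (Nat.dvd_lcm_left per Δ)
  have hlcm0 : 0 < Nat.lcm per Δ := Nat.pos_of_dvd_of_pos hlcmdvd hp0
  have hk0 : 0 < k := by
    rcases Nat.eq_zero_or_pos k with h | h
    · subst h; simp at hk; omega
    · exact h
  have hlcmper : SegPeriod w 1 n (Nat.lcm per Δ) := by
    have := segPeriod_mul hper k hk0 (by rw [Nat.mul_comm, ← hk]; omega)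
    rwa [Nat.mul_comm, ← hk] at this
  have h1 : pΔ ≤ Nat.lcm per Δ := hpΔmin _ hlcmper (Nat.dvd_lcm_right per Δ)
  -- per and Δ divide pΔ
  have hpΔlep : pΔ ≤ p := hpΔmin p hp hdvd
  have hperpΔ : per ∣ pΔ := per_dvd_of_two_mul hper hpermin pΔ hpΔ (by omega)
  have h2 : Nat.lcm per Δ ≤ pΔ := Nat.le_of_dvd hpΔ0 (Nat.lcm_dvd hperpΔ hpΔdvd)
  have heq : pΔ = Nat.lcm per Δ := le_antisymm h1 h2
  exact ⟨heq ▸ hlcmdvd, heq⟩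
end

section
/- Two cyclic roots u' and u'' of a repetition r are equal as words if and only if beg(u') ≡ beg(u'') (mod per(r)). -/
lemma seg_mul {β : Type*} (w : ℕ → β) {i j q : ℕ} (hq : SegPeriod w i j q) :
    ∀ m s, i ≤ s → s + m * q ≤ j → w s = w (s + m * q) := by
  intro m
  induction m with
  | zero => simp
  | succ m ih =>
    intro s hs hsm
    have hmul : s + (m + 1) * q = s + m * q + q := by ring
    have h1 : s + m * q ≤ j := by omega
    calc w s = w (s + m * q) := ih s hs h1
      _ = w (s + m * q + q) :=
          hq.2.2 _ (le_trans hs (Nat.le_add_right _ _)) (by omega)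
      _ = w (s + (m + 1) * q) := by rw [hmul]

lemma seg_congr {β : Type*} (w : ℕ → β) {i j q : ℕ} (hq : SegPeriod w i j q) :
    ∀ s t, i ≤ s → s ≤ j → i ≤ t → t ≤ j → s ≡ t [MOD q] → w s = w t := by
  have key : ∀ s t, i ≤ s → t ≤ j → s ≤ t → s ≡ t [MOD q] → w s = w t := by
    intro s t hs ht hst hmod
    obtain ⟨m, hm⟩ := (Nat.modEq_iff_dvd' hst).mp hmod
    rw [mul_comm] at hm
    have heq : t = s + m * q := by omega
    rw [heq]
    exact seg_mul w hq m s hs (by omega)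
  intro s t hs hsj ht htj hmod
  rcases le_total s t with h | h
  · exact key s t hs htj h hmod
  · exact (key t s ht hsj h hmod.symm).symm

lemma forward_aux {β : Type*} (w : ℕ → β) {i j q a b : ℕ}
    (hq : SegPeriod w i j q) (hqmin : ∀ r, SegPeriod w i j r → q ≤ r)
    (ha : i ≤ a) (ha' : a + q ≤ j + 1) (hb : i ≤ b) (hb' : b + q ≤ j + 1)
    (hab : a ≤ b) (H : ∀ t < q, w (a + t) = w (b + t)) : a ≡ b [MOD q] := by
  have hq0 : 0 < q := hq.1
  set d := (b - a) % q with hd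
  by_cases hd0 : d = 0
  · exact (Nat.modEq_iff_dvd' hab).mpr (Nat.dvd_of_mod_eq_zero hd0)
  · exfalso
    have hdq : d < q := Nat.mod_lt _ hq0
    have hdm := Nat.div_add_mod (b - a) q
    have hbd : b = a + d + q * ((b - a) / q) := by omega
    have claim : ∀ t, t < q → w (a + t) = w (a + d + t) := by
      intro t htq
      have h1 : w (a + t) = w (b + t) := H t htq
      have h2 : w (b + t) = w (a + d + t) := by
        apply seg_congr w hq
        · omega
        · omega
        · omega
        · omega
        · show (b + t) % q = (a + d + t) % q
          rw [hbd]
          conv_lhs => rw [show a + d + q * ((b - a) / q) + t = a + d + t + q * ((b - a) / q) by ring]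
          rw [Nat.add_mul_mod_self_left]
      exact h1.trans h2
    have hiq : i + q ≤ j + 1 := hq.2.1
    have hperd : SegPeriod w i j d := by
      refine ⟨Nat.pos_of_ne_zero hd0, by omega, ?_⟩
      intro t hti htd
      set k := q * (a / q) with hk
      have hka : k + a % q = a := Nat.div_add_mod a q
      have hmq : a % q < q := Nat.mod_lt _ hq0
      have hsa : a ≤ t + (k + q) := by omega
      set s := t + (k + q) - a with hs
      set t' := a + s % q with ht'
      have hslt : s % q < q := Nat.mod_lt _ hq0
      have hcong : t' ≡ t [MOD q] := by
        show (a + s % q) % q = t % q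
        have e1 : (a + s % q) % q = (a + s) % q :=
          (Nat.ModEq.add_left a (Nat.mod_modEq s q))
        have e2 : a + s = t + q * (a / q + 1) := by
          have : k + q = q * (a / q + 1) := by ring
          omega
        rw [e1, e2, Nat.add_mul_mod_self_left]
      have ht'2 : t' < a + q := by omega
      have e1 : w t = w t' := seg_congr w hq t t' (by omega) (by omega) (by omega) (by omega) hcong.symm
      have e2 : w (t + d) = w (t' + d) :=
        seg_congr w hq (t + d) (t' + d) (by omega) (by omega) (by omega) (by omega)
          (hcong.add_right d).symm
      have e3 : w t' = w (t' + d) := by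
        have hc := claim (s % q) hslt
        have : a + d + s % q = t' + d := by omega
        rw [this] at hc
        exact hc
      rw [e1, e3, ← e2]
    exact absurd (hqmin d hperd) (by omega)

/-- Two cyclic roots `w[a..a+q-1]`, `w[b..b+q-1]` of a repetition `r = w[i..j]`
(with smallest period `q` and `|r| ≥ 2q`) are equal as words if and only if
`a ≡ b (mod q)`. -/
theorem stmt2 {β : Type*} (w : ℕ → β) (i j q a b : ℕ)
    (hij : i ≤ j)
    (hq : SegPeriod w i j q) (hqmin : ∀ r, SegPeriod w i j r → q ≤ r)
    (hrep : 2 * q ≤ j + 1 - i)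
    (ha : i ≤ a) (ha' : a + q ≤ j + 1) (hb : i ≤ b) (hb' : b + q ≤ j + 1) :
    (∀ t < q, w (a + t) = w (b + t)) ↔ a ≡ b [MOD q] := by
  constructor
  · intro H
    rcases le_total a b with h | h
    · exact forward_aux w hq hqmin ha ha' hb hb' h H
    · exact (forward_aux w hq hqmin hb hb' ha ha' h
        (fun t ht => (H t ht).symm)).symm
  · intro hmod t htq
    exact seg_congr w hq (a + t) (b + t) (by omega) (by omega) (by omega) (by omega)
      (hmod.add_right t)
end

section
/- Let π₁ = (u'₁,u''₁) and π₂ = (u'₂,u''₂) be two distinct maximal gapped repeats in a word w, with copy lengths c₁ ≥ c₂ and periods p₁ ≠ p₂, such that there exists a point (i,j,c) covered by both, i.e., beg(u'ₖ) ≤ i ≤ beg(u'ₖ)+cₖ/6, beg(u''ₖ) ≤ j ≤ beg(u''ₖ)+cₖ/6, and cₖ ≥ c ≥ 2cₖ/3 for k=1,2. Then Δ = |p₁ - p₂| satisfies Δ ≤ 5c₂/12. -/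
/-- A gapped repeat in the word `w[1..n]`: left copy `w[i..i+c-1]`,
right copy `w[j..j+c-1]`, equal as words, non-overlapping (`i + c ≤ j`),
fitting in the word. Its period is `j - i` and copy length is `c`. -/
def IsGappedRepeat {β : Type*} (w : ℕ → β) (n i j c : ℕ) : Prop :=
  1 ≤ i ∧ 0 < c ∧ i + c ≤ j ∧ j + c ≤ n + 1 ∧ ∀ t < c, w (i + t) = w (j + t)

/-- A maximal gapped repeat: the copies cannot be extended by one letter to
the left nor to the right without breaking the period `j - i`. -/
def IsMaxGappedRepeat {β : Type*} (w : ℕ → β) (n i j c : ℕ) : Prop :=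
  IsGappedRepeat w n i j c ∧
  (1 < i → w (i - 1) ≠ w (j - 1)) ∧
  (j + c ≤ n → w (i + c) ≠ w (j + c))

/-- The gapped repeat with left copy starting at `i'`, right copy starting at `j'`
and copy length `c'` covers the point `(i, j, c)`. -/
def Covers (i' j' c' i j c : ℕ) : Prop :=
  i' ≤ i ∧ (i : ℚ) ≤ i' + (c' : ℚ) / 6 ∧
  j' ≤ j ∧ (j : ℚ) ≤ j' + (c' : ℚ) / 6 ∧
  c ≤ c' ∧ (2 * c' : ℚ) / 3 ≤ (c : ℚ)

/-- If two distinct maximal gapped repeats `π₁ = (i₁,j₁,c₁)`, `π₂ = (i₂,j₂,c₂)`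
with `c₁ ≥ c₂` and distinct periods cover a common point `(i,j,c)`, then the
difference of their periods satisfies `Δ = |p₁ - p₂| ≤ 5 c₂ / 12`. -/
theorem stmt4 {β : Type*} (w : ℕ → β) (n i₁ j₁ c₁ i₂ j₂ c₂ i j c : ℕ)
    (h₁ : IsMaxGappedRepeat w n i₁ j₁ c₁) (h₂ : IsMaxGappedRepeat w n i₂ j₂ c₂)
    (hne : (i₁, j₁, c₁) ≠ (i₂, j₂, c₂))
    (hc : c₂ ≤ c₁)
    (hp : j₁ - i₁ ≠ j₂ - i₂)
    (hcov₁ : Covers i₁ j₁ c₁ i j c) (hcov₂ : Covers i₂ j₂ c₂ i j c) :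
    |((j₁ - i₁ : ℕ) : ℚ) - ((j₂ - i₂ : ℕ) : ℚ)| ≤ 5 * (c₂ : ℚ) / 12 := by
  obtain ⟨hi1, hi1', hj1, hj1', hc1, hc1'⟩ := hcov₁
  obtain ⟨hi2, hi2', hj2, hj2', hc2, hc2'⟩ := hcov₂
  have hij1 : i₁ ≤ j₁ := le_trans (Nat.le_add_right _ _) h₁.1.2.2.1
  have hij2 : i₂ ≤ j₂ := le_trans (Nat.le_add_right _ _) h₂.1.2.2.1
  rw [Nat.cast_sub hij1, Nat.cast_sub hij2]
  have hi1q : (i₁ : ℚ) ≤ i := by exact_mod_cast hi1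
  have hi2q : (i₂ : ℚ) ≤ i := by exact_mod_cast hi2
  have hj1q : (j₁ : ℚ) ≤ j := by exact_mod_cast hj1
  have hj2q : (j₂ : ℚ) ≤ j := by exact_mod_cast hj2
  have hcc1 : (c : ℚ) ≤ c₁ := by exact_mod_cast hc1
  have hcc2 : (c : ℚ) ≤ c₂ := by exact_mod_cast hc2
  -- 2c₁/3 ≤ c ≤ c₂ so c₁ ≤ 3c₂/2
  rw [abs_le]
  constructor <;> linarith
end

section
/- Two distinct ordinary maximal gapped repeats in a word w cannot cover the same point: if (i,j,c) satisfies beg(u'ₖ) ≤ i ≤ beg(u'ₖ)+cₖ/6, beg(u''ₖ) ≤ j ≤ beg(u''ₖ)+cₖ/6, cₖ ≥ c ≥ 2cₖ/3 for both repeats πₖ (k=1,2), then π₁ = π₂. -/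
/-- The segment of `w` starting at position `a` of length `c` is periodic,
i.e. has exponent at least `2`: it has a period `p` with `2 * p ≤ c`. -/
def PeriodicSeg {β : Type*} (w : ℕ → β) (a c : ℕ) : Prop :=
  ∃ p, 0 < p ∧ 2 * p ≤ c ∧ ∀ t, t + p < c → w (a + t) = w (a + (t + p))

/-- An ordinary maximal gapped repeat: neither periodic (copies of exponent ≥ 2),
nor prefix semiperiodic, nor suffix semiperiodic (no periodic prefix/suffix of
the copies of length at least half the copy length). -/
def Ordinary {β : Type*} (w : ℕ → β) (n i j c : ℕ) : Prop :=
  IsMaxGappedRepeat w n i j c ∧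
  ¬ PeriodicSeg w i c ∧
  ¬ (∃ l, c ≤ 2 * l ∧ l ≤ c ∧ PeriodicSeg w i l) ∧
  ¬ (∃ l, c ≤ 2 * l ∧ l ≤ c ∧ PeriodicSeg w (i + c - l) l)

lemma covers_nat {i' j' c' i j c : ℕ} (h : Covers i' j' c' i j c) :
    i' ≤ i ∧ 6*i ≤ 6*i' + c' ∧ j' ≤ j ∧ 6*j ≤ 6*j' + c' ∧ c ≤ c' ∧ 2*c' ≤ 3*c := by
  obtain ⟨h1, h2, h3, h4, h5, h6⟩ := h
  refine ⟨h1, ?_, h3, ?_, h5, ?_⟩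
  · have : (6*i:ℚ) ≤ 6*i' + c' := by linarith
    exact_mod_cast this
  · have : (6*j:ℚ) ≤ 6*j' + c' := by linarith
    exact_mod_cast this
  · have : (2*c':ℚ) ≤ 3*c := by linarith
    exact_mod_cast this

/-- Two ordinary maximal gapped repeats covering the same point cannot have
different periods `j₁ - i₁ < j₂ - i₂`. -/
lemma unequal_periods {β : Type*} (w : ℕ → β) (n i₁ j₁ c₁ i₂ j₂ c₂ i j c : ℕ)
    (h₁ : Ordinary w n i₁ j₁ c₁) (h₂ : Ordinary w n i₂ j₂ c₂)
    (hcov₁ : Covers i₁ j₁ c₁ i j c) (hcov₂ : Covers i₂ j₂ c₂ i j c)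
    (hp : j₁ + i₂ < j₂ + i₁) : False := by
  obtain ⟨hi1, h6i1, hj1, h6j1, hc1, hcc1⟩ := covers_nat hcov₁
  obtain ⟨hi2, h6i2, hj2, h6j2, hc2, hcc2⟩ := covers_nat hcov₂
  obtain ⟨⟨⟨hi1', hc1', hij1, hn1, hrep1⟩, _, _⟩, _, _, hsuf1⟩ := h₁
  obtain ⟨⟨⟨hi2', hc2', hij2, hn2, hrep2⟩, _, _⟩, _, _, hsuf2⟩ := h₂
  set d := (j₂ + i₁) - (j₁ + i₂) with hd
  have key : ∀ b, b ≤ i₁ + c₁ → b ≤ i₂ + c₂ →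
      ∀ t, t + d < b - i → w (i + t) = w (i + (t + d)) := by
    intro b hb1 hb2 t ht
    have e2 := hrep2 (i + t - i₂) (by omega)
    have e1 := hrep1 (i + t + d - i₁) (by omega)
    have E2 : i₂ + (i + t - i₂) = i + t := by omega
    have E1 : i₁ + (i + t + d - i₁) = i + (t + d) := by omega
    have EJ : j₂ + (i + t - i₂) = j₁ + (i + t + d - i₁) := by omega
    rw [E2, EJ] at e2
    rw [E1] at e1
    exact e2.trans e1.symm
  rcases le_total (i₁ + c₁) (i₂ + c₂) with hb | hb
  · refine hsuf1 ⟨i₁ + c₁ - i, by omega, by omega, d, by omega, by omega, ?_⟩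
    intro t ht
    have E : i₁ + c₁ - (i₁ + c₁ - i) = i := by omega
    rw [E]
    exact key (i₁ + c₁) le_rfl hb t (by omega)
  · refine hsuf2 ⟨i₂ + c₂ - i, by omega, by omega, d, by omega, by omega, ?_⟩
    intro t ht
    have E : i₂ + c₂ - (i₂ + c₂ - i) = i := by omega
    rw [E]
    exact key (i₂ + c₂) hb le_rfl t (by omega)

/-- With equal periods, the left copies must start at the same position. -/
lemma eq_start {β : Type*} (w : ℕ → β) (n i₁ j₁ c₁ i₂ j₂ c₂ i j c : ℕ)
    (h₁ : Ordinary w n i₁ j₁ c₁) (h₂ : Ordinary w n i₂ j₂ c₂)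
    (hcov₁ : Covers i₁ j₁ c₁ i j c) (hcov₂ : Covers i₂ j₂ c₂ i j c)
    (hpe : j₁ + i₂ = j₂ + i₁) (hlt : i₁ < i₂) : False := by
  obtain ⟨hi1, h6i1, hj1, h6j1, hc1, hcc1⟩ := covers_nat hcov₁
  obtain ⟨hi2, h6i2, hj2, h6j2, hc2, hcc2⟩ := covers_nat hcov₂
  obtain ⟨⟨⟨hi1', hc1', hij1, hn1, hrep1⟩, _, _⟩, _, _, _⟩ := h₁
  obtain ⟨⟨⟨hi2', hc2', hij2, hn2, hrep2⟩, hmaxL2, _⟩, _, _, _⟩ := h₂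
  apply hmaxL2 (by omega)
  have e := hrep1 (i₂ - 1 - i₁) (by omega)
  have E1 : i₁ + (i₂ - 1 - i₁) = i₂ - 1 := by omega
  have E2 : j₁ + (i₂ - 1 - i₁) = j₂ - 1 := by omega
  rw [E1, E2] at e
  exact e

/-- With equal periods and equal starts, the copy lengths are equal. -/
lemma eq_len {β : Type*} (w : ℕ → β) (n i₁ j₁ c₁ i₂ j₂ c₂ : ℕ)
    (h₁ : Ordinary w n i₁ j₁ c₁) (h₂ : Ordinary w n i₂ j₂ c₂)
    (hi : i₁ = i₂) (hj : j₁ = j₂) (hlt : c₁ < c₂) : False := by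
  obtain ⟨⟨⟨hi1', hc1', hij1, hn1, hrep1⟩, _, hmaxR1⟩, _, _, _⟩ := h₁
  obtain ⟨⟨⟨hi2', hc2', hij2, hn2, hrep2⟩, _, _⟩, _, _, _⟩ := h₂
  apply hmaxR1 (by omega)
  have e := hrep2 c₁ hlt
  rw [← hi, ← hj] at e
  exact e

/-- Two distinct ordinary maximal gapped repeats cannot cover the same point:
if both cover `(i, j, c)` then they coincide. -/
theorem stmt5 {β : Type*} (w : ℕ → β) (n i₁ j₁ c₁ i₂ j₂ c₂ i j c : ℕ)
    (h₁ : Ordinary w n i₁ j₁ c₁) (h₂ : Ordinary w n i₂ j₂ c₂)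
    (hcov₁ : Covers i₁ j₁ c₁ i j c) (hcov₂ : Covers i₂ j₂ c₂ i j c) :
    i₁ = i₂ ∧ j₁ = j₂ ∧ c₁ = c₂ := by
  rcases lt_trichotomy (j₁ + i₂) (j₂ + i₁) with hp | hp | hp
  · exact (unequal_periods w n i₁ j₁ c₁ i₂ j₂ c₂ i j c h₁ h₂ hcov₁ hcov₂ hp).elim
  · have hieq : i₁ = i₂ := by
      rcases lt_trichotomy i₁ i₂ with h | h | h
      · exact (eq_start w n i₁ j₁ c₁ i₂ j₂ c₂ i j c h₁ h₂ hcov₁ hcov₂ hp h).elim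
      · exact h
      · exact (eq_start w n i₂ j₂ c₂ i₁ j₁ c₁ i j c h₂ h₁ hcov₂ hcov₁ hp.symm h).elim
    have hjeq : j₁ = j₂ := by omega
    refine ⟨hieq, hjeq, ?_⟩
    rcases lt_trichotomy c₁ c₂ with h | h | h
    · exact (eq_len w n i₁ j₁ c₁ i₂ j₂ c₂ h₁ h₂ hieq hjeq h).elim
    · exact h
    · exact (eq_len w n i₂ j₂ c₂ i₁ j₁ c₁ h₂ h₁ hieq.symm hjeq.symm h).elim
  · exact (unequal_periods w n i₂ j₂ c₂ i₁ j₁ c₁ i j c h₂ h₁ hcov₂ hcov₁ hp).elim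
end

section
/- For any 0 < δ < 1, the number of maximal δ-subrepetitions in a word w is at most the number of maximal (1/δ)-gapped repeats in w. -/
def MinSegPeriod {β : Type*} (w : ℕ → β) (a b p : ℕ) : Prop :=
  SegPeriod w a b p ∧ ∀ q, SegPeriod w a b q → p ≤ q

def MaxSubrep {β : Type*} (w : ℕ → β) (n : ℕ) (δ : ℚ) (a b : ℕ) : Prop :=
  ∃ q, 1 ≤ a ∧ a ≤ b ∧ b ≤ n ∧ MinSegPeriod w a b q ∧
    (1 + δ) * (q : ℚ) ≤ (b : ℚ) + 1 - a ∧ (b : ℚ) + 1 - a < 2 * q ∧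
    (1 < a → w (a - 1) ≠ w (a - 1 + q)) ∧
    (b < n → w (b + 1 - q) ≠ w (b + 1))

lemma subrep_key {β : Type*} (w : ℕ → β) (n : ℕ) (δ : ℚ) (hδ0 : 0 < δ)
    {a b q : ℕ}
    (h1 : 1 ≤ a) (h2 : a ≤ b) (h3 : b ≤ n) (hmp : MinSegPeriod w a b q)
    (h4 : (1 + δ) * (q : ℚ) ≤ (b : ℚ) + 1 - a) (h5 : (b : ℚ) + 1 - a < 2 * q)
    (h6 : 1 < a → w (a - 1) ≠ w (a - 1 + q))
    (h7 : b < n → w (b + 1 - q) ≠ w (b + 1)) :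
    a + q ≤ b ∧ IsMaxGappedRepeat w n a (a + q) (b + 1 - a - q) ∧
      (((a + q) - a : ℕ) : ℚ) ≤ (1/δ) * ((b + 1 - a - q : ℕ) : ℚ) := by
  obtain ⟨⟨hq0, hqle, hper⟩, hmin⟩ := hmp
  have hq1 : (1 : ℚ) ≤ q := by exact_mod_cast hq0
  have haq : a + q ≤ b := by
    have : (q : ℚ) < (b : ℚ) + 1 - a := by nlinarith
    have : (a : ℚ) + q < (b : ℚ) + 1 := by linarith
    have := (by exact_mod_cast this : a + q < b + 1)
    omega
  set c := b + 1 - a - q with hc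
  have hbc : b + 1 = a + q + c := by omega
  have hcq : (c : ℚ) = (b : ℚ) + 1 - a - q := by
    have h' : ((a + q + c : ℕ) : ℚ) = ((b + 1 : ℕ) : ℚ) := by rw [← hbc]
    push_cast at h'
    linarith
  have hc0 : 0 < c := by omega
  have hclt : c < q := by
    have : (c : ℚ) < q := by rw [hcq]; linarith
    exact_mod_cast this
  refine ⟨haq, ⟨⟨h1, hc0, by omega, by omega, ?_⟩, ?_, ?_⟩, ?_⟩
  · intro t ht
    have := hper (a + t) (by omega) (by omega)
    convert this using 2
    omega
  · intro ha
    have := h6 ha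
    convert this using 2
    omega
  · intro hle
    have hbn : b < n := by omega
    have := h7 hbn
    have e1 : a + c = b + 1 - q := by omega
    have e2 : a + q + c = b + 1 := by omega
    rw [e1, e2]
    exact this
  · have hsub : ((a + q) - a : ℕ) = q := by omega
    rw [hsub]
    rw [div_mul_eq_mul_div, le_div_iff₀ hδ0]
    have : δ * q ≤ c := by rw [hcq]; nlinarith
    linarith [this]

/-- For `0 < δ < 1`, the number of maximal `δ`-subrepetitions in `w[1..n]` is at
most the number of maximal `(1/δ)`-gapped repeats in `w[1..n]`. -/
theorem stmt9 {β : Type*} (w : ℕ → β) (n : ℕ) (δ : ℚ) (hδ0 : 0 < δ) (hδ1 : δ < 1) :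
    Set.ncard {ab : ℕ × ℕ | MaxSubrep w n δ ab.1 ab.2} ≤
      Set.ncard {t : ℕ × ℕ × ℕ | IsMaxGappedRepeat w n t.1 t.2.1 t.2.2 ∧
        ((t.2.1 - t.1 : ℕ) : ℚ) ≤ (1 / δ) * t.2.2} := by
  classical
  set S := {ab : ℕ × ℕ | MaxSubrep w n δ ab.1 ab.2} with hS
  set T := {t : ℕ × ℕ × ℕ | IsMaxGappedRepeat w n t.1 t.2.1 t.2.2 ∧
        ((t.2.1 - t.1 : ℕ) : ℚ) ≤ (1 / δ) * t.2.2} with hT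
  have hTfin : T.Finite := by
    apply Set.Finite.subset (Set.finite_Icc ((0:ℕ),(0:ℕ),(0:ℕ)) (n+1, n+1, n+1))
    rintro ⟨i, j, c⟩ ⟨⟨⟨hi1, hc0, hij, hjn, _⟩, _⟩, _⟩
    simp only [Set.mem_Icc, Prod.mk_le_mk] at *
    omega
  set f : ℕ × ℕ → ℕ × ℕ × ℕ := fun ab =>
    if h : MaxSubrep w n δ ab.1 ab.2 then
      (ab.1, ab.1 + h.choose, ab.2 + 1 - ab.1 - h.choose)
    else (0, 0, 0) with hf
  apply Set.ncard_le_ncard_of_injOn f _ _ hTfin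
  · rintro ⟨a, b⟩ hab
    have h : MaxSubrep w n δ a b := hab
    simp only [hf, dif_pos h]
    obtain ⟨h1, h2, h3, hmp, h4, h5, h6, h7⟩ := h.choose_spec
    obtain ⟨_, hmax, hbd⟩ := subrep_key w n δ hδ0 h1 h2 h3 hmp h4 h5 h6 h7
    exact ⟨hmax, hbd⟩
  · rintro ⟨a, b⟩ hab ⟨a', b'⟩ hab' heq
    have h : MaxSubrep w n δ a b := hab
    have h' : MaxSubrep w n δ a' b' := hab'
    simp only [hf, dif_pos h, dif_pos h'] at heq
    obtain ⟨h1, h2, h3, hmp, h4, h5, h6, h7⟩ := h.choose_spec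
    obtain ⟨h1', h2', h3', hmp', h4', h5', h6', h7'⟩ := h'.choose_spec
    obtain ⟨haq, _, _⟩ := subrep_key w n δ hδ0 h1 h2 h3 hmp h4 h5 h6 h7
    obtain ⟨haq', _, _⟩ := subrep_key w n δ hδ0 h1' h2' h3' hmp' h4' h5' h6' h7'
    simp only [Prod.mk.injEq] at heq
    obtain ⟨e1, e2, e3⟩ := heq
    subst e1
    have hq : h.choose = h'.choose := by omega
    have : b = b' := by omega
    simp [this]
end

section
/- Let π = (u',u'') be a maximal gapped repeat in w whose copies contain a pair of corresponding factors having the same extension r (a maximal repetition). Then both u' and u'' are contained in r, i.e., beg(r) ≤ beg(u') and end(u'') ≤ end(r). -/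
/-- `w[a..b]` is a maximal repetition (run) of `w[1..n]` with smallest period `q`:
it is a repetition (`2 * q ≤ |w[a..b]|`, `q` its smallest period) which cannot be
extended by one letter to the left nor to the right keeping period `q`. -/
def MaxRepetition {β : Type*} (w : ℕ → β) (n a b q : ℕ) : Prop :=
  1 ≤ a ∧ b ≤ n ∧ MinSegPeriod w a b q ∧ 2 * q ≤ b + 1 - a ∧
  (1 < a → w (a - 1) ≠ w (a - 1 + q)) ∧
  (b < n → w (b + 1 - q) ≠ w (b + 1))

/-- If the copies of a maximal gapped repeat `(i,j,c)` with period `p = j - i`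
contain corresponding factors `w[a..b]` and `w[a+p..b+p]` which are repetitions
having the same extension, the maximal repetition `r = w[ra..rb]`, then both
copies are contained in `r`: `ra ≤ i` and `j + c - 1 ≤ rb`. -/
theorem stmt10 {β : Type*} (w : ℕ → β) (n i j c a b ra rb q : ℕ)
    (hπ : IsMaxGappedRepeat w n i j c)
    (ha : i ≤ a) (hab : a ≤ b) (hb : b + 1 ≤ i + c)
    (hr : MaxRepetition w n ra rb q)
    (hyrep : 2 * q ≤ b + 1 - a)
    (hy1 : MinSegPeriod w a b q) (hcon1 : ra ≤ a ∧ b ≤ rb)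
    (hy2 : MinSegPeriod w (a + (j - i)) (b + (j - i)) q)
    (hcon2 : ra ≤ a + (j - i) ∧ b + (j - i) ≤ rb) :
    ra ≤ i ∧ j + c ≤ rb + 1 := by
  obtain ⟨⟨hi1, hc, hic, hjc, heq⟩, hleft, hright⟩ := hπ
  obtain ⟨hra1, hrbn, ⟨⟨hq0, hqlen, hper⟩, _⟩, hrep, hL, hR⟩ := hr
  obtain ⟨hra2, hrb2⟩ := hcon2
  obtain ⟨hra', hrb'⟩ := hcon1
  set p := j - i with hpdef
  have hj : j = i + p := by omega
  have hpc : c ≤ p := by omega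
  have key : ∀ t, i ≤ t → t < i + c → w t = w (t + p) := by
    intro t ht ht'
    have h := heq (t - i) (by omega)
    rw [show i + (t - i) = t by omega, show j + (t - i) = t + p by omega] at h
    exact h
  have haq : a + 2 * q ≤ b + 1 := by omega
  constructor
  · by_contra hcon
    push_neg at hcon
    apply hL (by omega)
    have e1 : w (ra - 1) = w (ra - 1 + p) := key (ra - 1) (by omega) (by omega)
    have e2 : w (ra - 1 + q) = w (ra - 1 + q + p) :=
      key (ra - 1 + q) (by omega) (by omega)
    have e3 : w (ra - 1 + p) = w (ra - 1 + p + q) :=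
      hper (ra - 1 + p) (by omega) (by omega)
    rw [e1, e3, show ra - 1 + p + q = ra - 1 + q + p by omega, ← e2]
  · by_contra hcon
    push_neg at hcon
    apply hR (by omega)
    have e1 : w (rb + 1 - p) = w (rb + 1) := by
      have h := key (rb + 1 - p) (by omega) (by omega)
      rwa [show rb + 1 - p + p = rb + 1 by omega] at h
    have e2 : w (rb + 1 - q - p) = w (rb + 1 - q) := by
      have h := key (rb + 1 - q - p) (by omega) (by omega)
      rwa [show rb + 1 - q - p + p = rb + 1 - q by omega] at h
    have e3 : w (rb + 1 - q - p) = w (rb + 1 - p) := by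
      have h := hper (rb + 1 - q - p) (by omega) (by omega)
      rwa [show rb + 1 - q - p + q = rb + 1 - p by omega] at h
    rw [← e2, e3, e1]
end

section
/- A maximal repetition r generates at most exp(r)/2 maximal PR-repeats, where exp(r) = |r|/per(r). -/
/-- The maximal repetition `w[ra..rb]` with smallest period `q` generates the
gapped repeat `(i, j, c)`: both copies are repetitions with smallest period `q`
whose extension is `w[ra..rb]` (equivalently, they are contained in it). -/
def GeneratedBy {β : Type*} (w : ℕ → β) (ra rb q i j c : ℕ) : Prop :=
  2 * q ≤ c ∧ ra ≤ i ∧ i + c ≤ rb + 1 ∧ ra ≤ j ∧ j + c ≤ rb + 1 ∧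
  MinSegPeriod w i (i + c - 1) q ∧ MinSegPeriod w j (j + c - 1) q

/-- Iterated application of a period `q` on a segment. -/
lemma run_step {β : Type*} (w : ℕ → β) (ra rb q : ℕ)
    (hq : ∀ t, ra ≤ t → t + q ≤ rb → w t = w (t + q)) :
    ∀ m t, ra ≤ t → t + m * q ≤ rb → w t = w (t + m * q) := by
  intro m
  induction m with
  | zero => simp
  | succ m ih =>
    intro t ht hle
    have hmq : (m + 1) * q = q + m * q := by ring
    have h1 : t + q ≤ rb := by omega
    have e1 : w t = w (t + q) := hq t ht h1
    have e2 : w (t + q) = w (t + q + m * q) := ih (t + q) (by omega) (by omega)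
    have e3 : t + q + m * q = t + (m + 1) * q := by omega
    rw [e1, e2, e3]

/-- A maximal repetition `r = w[ra..rb]` with smallest period `q` generates at
most `exp(r)/2 = |r|/(2q)` maximal PR-repeats. -/
theorem stmt12 {β : Type*} (w : ℕ → β) (n ra rb q : ℕ)
    (hr : MaxRepetition w n ra rb q) :
    ((Set.ncard {t : ℕ × ℕ × ℕ | IsMaxGappedRepeat w n t.1 t.2.1 t.2.2 ∧
        GeneratedBy w ra rb q t.1 t.2.1 t.2.2} : ℕ) : ℚ)
      ≤ ((rb : ℚ) + 1 - ra) / (2 * q) := by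
  obtain ⟨hra, hrbn, ⟨⟨hq0, hqle, hper⟩, hrmin⟩, hlen, hleft, hright⟩ := hr
  set L : ℕ := rb + 1 - ra with hLdef
  have hraL : ra ≤ rb + 1 := by omega
  have hstep := run_step w ra rb q hper
  set S : Set (ℕ × ℕ × ℕ) := {t : ℕ × ℕ × ℕ | IsMaxGappedRepeat w n t.1 t.2.1 t.2.2 ∧
        GeneratedBy w ra rb q t.1 t.2.1 t.2.2} with hSdef
  have key : S ⊆ (fun k => ((ra, ra + k * q, L - k * q) : ℕ × ℕ × ℕ)) ''
      Set.Icc (L / (2 * q)) (L / q - 2) := by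
    rintro ⟨i, j, c⟩ ⟨⟨⟨hi1, hc0, hij, hjcn, hrep⟩, hml, hmr⟩,
      h2qc, hrai, hicrb, hraj, hjcrb, ⟨⟨hq0', hqc, hcopyper⟩, hcopymin⟩, _⟩
    dsimp only at hi1 hc0 hij hjcn hrep hml hmr h2qc hrai hicrb hraj hjcrb hq0' hqc hcopyper hcopymin
    set p : ℕ := j - i with hpdef
    have hjp : j = i + p := by omega
    have hcp : c ≤ p := by omega
    -- q divides p
    have hdvd : q ∣ p := by
      by_contra hnd
      have hmd := Nat.mod_add_div' p q
      have hr0 : 0 < p % q := by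
        rcases Nat.eq_zero_or_pos (p % q) with h | h
        · exact absurd (Nat.dvd_of_mod_eq_zero h) hnd
        · exact h
      have hrlt : p % q < q := Nat.mod_lt _ hq0
      have hsp : SegPeriod w i (i + c - 1) (p % q) := by
        refine ⟨hr0, by omega, ?_⟩
        intro t ht htle
        have ht' : t - i < c := by omega
        have e1 : w t = w (t + p) := by
          have h := hrep (t - i) ht'
          have e : i + (t - i) = t := by omega
          have e' : j + (t - i) = t + p := by omega
          rwa [e, e'] at h
        have e2 : w (t + p % q) = w (t + p % q + p / q * q) :=
          hstep (p / q) (t + p % q) (by omega) (by omega)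
        have e3 : t + p % q + p / q * q = t + p := by omega
        rw [e3] at e2
        rw [e1, ← e2]
      have := hcopymin _ hsp
      omega
    obtain ⟨k, hk⟩ := hdvd
    have hkq : k * q = p := by rw [hk]; ring
    -- left maximality forces i = ra
    have hia : i = ra := by
      by_contra hne
      have hlt : ra < i := lt_of_le_of_ne hrai (Ne.symm hne)
      have h1i : 1 < i := by omega
      apply hml h1i
      have e : w (i - 1) = w (i - 1 + k * q) :=
        hstep k (i - 1) (by omega) (by omega)
      have e' : i - 1 + k * q = j - 1 := by omega
      rw [← e']; exact e
    -- right maximality forces j + c = rb + 1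
    have hjcr : j + c = rb + 1 := by
      by_contra hne
      have hlt : j + c ≤ rb := by omega
      apply hmr (by omega)
      have e : w (i + c) = w (i + c + k * q) :=
        hstep k (i + c) (by omega) (by omega)
      have e' : i + c + k * q = j + c := by omega
      rw [← e']; exact e
    have hLpc : L = p + c := by omega
    refine ⟨k, ⟨?_, ?_⟩, ?_⟩
    · -- L / (2*q) ≤ k
      have h1 : L ≤ 2 * q * k := by
        have : 2 * q * k = 2 * p := by rw [← hkq]; ring
        omega
      calc L / (2 * q) ≤ (2 * q * k) / (2 * q) := Nat.div_le_div_right h1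
        _ = k := Nat.mul_div_cancel_left k (by omega)
    · -- k ≤ L / q - 2
      have h1 : (k + 2) * q ≤ L := by
        have : (k + 2) * q = p + 2 * q := by rw [← hkq]; ring
        omega
      have h2 : k + 2 ≤ L / q := (Nat.le_div_iff_mul_le hq0).mpr h1
      omega
    · simp only [Prod.mk.injEq]
      exact ⟨hia.symm, by omega, by omega⟩
  -- counting
  have hfin : (Set.Icc (L / (2 * q)) (L / q - 2)).Finite := Set.finite_Icc _ _
  have hNle : S.ncard ≤ (L / q - 2) + 1 - L / (2 * q) := by
    have h1 : S.ncard ≤ ((fun k => ((ra, ra + k * q, L - k * q) : ℕ × ℕ × ℕ)) ''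
        Set.Icc (L / (2 * q)) (L / q - 2)).ncard :=
      Set.ncard_le_ncard key (hfin.image _)
    have h2 := Set.ncard_image_le (f := fun k => ((ra, ra + k * q, L - k * q) : ℕ × ℕ × ℕ)) hfin
    have h3 : (Set.Icc (L / (2 * q)) (L / q - 2)).ncard = (L / q - 2) + 1 - L / (2 * q) := by
      rw [← Finset.coe_Icc, Set.ncard_coe_finset, Nat.card_Icc]
    omega
  -- arithmetic: (L/q - 2) + 1 - L/(2q) ≤ L/(2q) ≤ (rb+1-ra)/(2q) in ℚ
  have hdd : L / (2 * q) = L / q / 2 := by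
    rw [Nat.div_div_eq_div_mul, Nat.mul_comm]
  have hm2 := Nat.div_add_mod (L / q) 2
  have hmod2 : L / q % 2 < 2 := Nat.mod_lt _ (by omega)
  have hLq2 : 2 ≤ L / q := (Nat.le_div_iff_mul_le hq0).mpr (by omega)
  have hnat : (L / q - 2) + 1 - L / (2 * q) ≤ L / (2 * q) := by omega
  have hS : S.ncard ≤ L / (2 * q) := le_trans hNle hnat
  have hcast : ((L / (2 * q) : ℕ) : ℚ) ≤ (L : ℚ) / ((2 * q : ℕ) : ℚ) := Nat.cast_div_le
  have hLQ : (L : ℚ) = (rb : ℚ) + 1 - ra := by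
    rw [hLdef]
    push_cast [hraL]
    ring
  calc ((S.ncard : ℕ) : ℚ) ≤ ((L / (2 * q) : ℕ) : ℚ) := by exact_mod_cast hS
    _ ≤ (L : ℚ) / ((2 * q : ℕ) : ℚ) := hcast
    _ = ((rb : ℚ) + 1 - ra) / (2 * q) := by rw [hLQ]; push_cast; ring
end

section
/- Let (u',u'') be a maximal gapped repeat, y' a factor of u' and y'' the corresponding factor of u'', with extensions r' and r'' (maximal repetitions) of y' and y'' respectively, where r' ≠ r''. If beg(u') < beg(r'), then beg(r') - beg(u') = beg(r'') - beg(u''). -/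
/-- Let `(i,j,c)` be a maximal gapped repeat with period `p = j - i`, let
`w[a..b]` be a repetition contained in the left copy with smallest period `q`
and extension the maximal repetition `r' = w[ra..rb]`, and let the corresponding
factor `w[a+p..b+p]` of the right copy have extension `r'' = w[ra'..rb']`, with
`r' ≠ r''`. If `beg(u') < beg(r')` then `beg(r') - beg(u') = beg(r'') - beg(u'')`. -/
theorem stmt14 {β : Type*} (w : ℕ → β) (n i j c a b q ra rb ra' rb' : ℕ)
    (hπ : IsMaxGappedRepeat w n i j c)
    (ha : i ≤ a) (hab : a ≤ b) (hb : b + 1 ≤ i + c)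
    (hy1 : MinSegPeriod w a b q) (hyrep : 2 * q ≤ b + 1 - a)
    (hr1 : MaxRepetition w n ra rb q) (hc1 : ra ≤ a) (hc1' : b ≤ rb)
    (hy2 : MinSegPeriod w (a + (j - i)) (b + (j - i)) q)
    (hr2 : MaxRepetition w n ra' rb' q)
    (hc2 : ra' ≤ a + (j - i)) (hc2' : b + (j - i) ≤ rb')
    (hne : (ra, rb) ≠ (ra', rb'))
    (hbeg : i < ra) :
    (ra : ℤ) - (i : ℤ) = (ra' : ℤ) - (j : ℤ) := by
  have hij : i + c ≤ j := hπ.1.2.2.1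
  have hc : 0 < c := hπ.1.2.1
  have hi1 : 1 ≤ i := hπ.1.1
  have hq : 0 < q := hy1.1.1
  have haq : a + q ≤ b := by omega
  have copy : ∀ s, i ≤ s → s + 1 ≤ i + c → w s = w (s + (j - i)) := by
    intro s h1 h2
    have h := hπ.1.2.2.2.2 (s - i) (by omega)
    have e1 : i + (s - i) = s := by omega
    have e2 : j + (s - i) = s + (j - i) := by omega
    rwa [e1, e2] at h
  have per1 := hr1.2.2.1.1.2.2
  have per2 := hr2.2.2.1.1.2.2
  have claim1 : ra' ≤ ra + (j - i) := by
    by_contra h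
    push_neg at h
    apply hr2.2.2.2.2.1 (by omega)
    set t1 := ra' - 1 - (j - i) with ht1
    have e : ra' - 1 = t1 + (j - i) := by omega
    have s1 : w (ra' - 1) = w t1 := by
      rw [e]; exact (copy t1 (by omega) (by omega)).symm
    have s2 : w t1 = w (t1 + q) := per1 t1 (by omega) (by omega)
    have s3 : w (t1 + q) = w (t1 + q + (j - i)) := copy (t1 + q) (by omega) (by omega)
    have e2 : t1 + q + (j - i) = ra' - 1 + q := by omega
    rw [s1, s2, s3, e2]
  have claim2 : ra + (j - i) ≤ ra' := by
    by_contra h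
    push_neg at h
    apply hr1.2.2.2.2.1 (by omega)
    have s1 : w (ra - 1) = w (ra - 1 + (j - i)) := copy (ra - 1) (by omega) (by omega)
    have s2 : w (ra - 1 + (j - i)) = w (ra - 1 + (j - i) + q) :=
      per2 (ra - 1 + (j - i)) (by omega) (by omega)
    have s3 : w (ra - 1 + q) = w (ra - 1 + q + (j - i)) := copy (ra - 1 + q) (by omega) (by omega)
    have e2 : ra - 1 + (j - i) + q = ra - 1 + q + (j - i) := by omega
    rw [s1, s2, e2, ← s3]
  have : ra' = ra + (j - i) := le_antisymm claim1 claim2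
  omega
end

section
/- Let (u',u'') be a maximal gapped repeat, y' a periodic factor of u' and y'' the corresponding factor of u'', with distinct extensions r' and r''. If end(u') > end(r'), then end(u') - end(r') = end(u'') - end(r''). -/
/-- Let `(i,j,c)` be a maximal gapped repeat with period `p = j - i`, let
`w[a..b]` be a repetition contained in the left copy with smallest period `q`
and extension the maximal repetition `r' = w[ra..rb]`, and let the corresponding
factor `w[a+p..b+p]` of the right copy have extension `r'' = w[ra'..rb']`, with
`r' ≠ r''`. If `end(u') > end(r')` then `end(u') - end(r') = end(u'') - end(r'')`. -/
theorem stmt15 {β : Type*} (w : ℕ → β) (n i j c a b q ra rb ra' rb' : ℕ)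
    (hπ : IsMaxGappedRepeat w n i j c)
    (ha : i ≤ a) (hab : a ≤ b) (hb : b + 1 ≤ i + c)
    (hy1 : MinSegPeriod w a b q) (hyrep : 2 * q ≤ b + 1 - a)
    (hr1 : MaxRepetition w n ra rb q) (hc1 : ra ≤ a) (hc1' : b ≤ rb)
    (hy2 : MinSegPeriod w (a + (j - i)) (b + (j - i)) q)
    (hr2 : MaxRepetition w n ra' rb' q)
    (hc2 : ra' ≤ a + (j - i)) (hc2' : b + (j - i) ≤ rb')
    (hne : (ra, rb) ≠ (ra', rb'))
    (hend : rb + 1 < i + c) :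
    ((i : ℤ) + (c : ℤ) - 1) - (rb : ℤ) = ((j : ℤ) + (c : ℤ) - 1) - (rb' : ℤ) := by

  obtain ⟨⟨hi1, hc0, hicj, hjcn, hcorr⟩, _, _⟩ := hπ
  obtain ⟨hra1, hrbn, ⟨⟨hq0, hqlen1, hper1⟩, _⟩, hrep1, hleft1, hright1⟩ := hr1
  obtain ⟨hra1', hrbn', ⟨⟨_, hqlen2, hper2⟩, _⟩, hrep2, hleft2, hright2⟩ := hr2
  obtain ⟨⟨_, haq, _⟩, _⟩ := hy1
  -- correspondence between copies
  have corr' : ∀ x, i ≤ x → x < i + c → w x = w (x + (j - i)) := by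
    intro x h1 h2
    have h := hcorr (x - i) (by omega)
    have e1 : i + (x - i) = x := by omega
    have e2 : j + (x - i) = x + (j - i) := by omega
    rwa [e1, e2] at h
  have key : rb' = rb + (j - i) := by
    by_contra hK
    rcases Nat.lt_or_ge rb' (rb + (j - i)) with hA | hB
    · -- rb' too small: contradict right-maximality of r''
      set x := rb' + 1 - (j - i) with hxdef
      have hx : x + (j - i) = rb' + 1 := by omega
      have hx1 : b + 1 ≤ x := by omega
      have hx2 : x ≤ rb := by omega
      have e3 : w (x - q) = w x := by
        have := hper1 (x - q) (by omega) (by omega)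
        have e : x - q + q = x := by omega
        rwa [e] at this
      have e4 : w x = w (rb' + 1) := by
        have := corr' x (by omega) (by omega)
        rwa [hx] at this
      have e5 : w (x - q) = w (rb' + 1 - q) := by
        have := corr' (x - q) (by omega) (by omega)
        have e : x - q + (j - i) = rb' + 1 - q := by omega
        rwa [e] at this
      exact hright2 (by omega) (by rw [← e5, e3, e4])
    · have hB' : rb + (j - i) < rb' := by omega
      -- rb' too large: contradict right-maximality of r'
      have e3 : w (rb + 1 - q + (j - i)) = w (rb + 1 + (j - i)) := by
        have := hper2 (rb + 1 - q + (j - i)) (by omega) (by omega)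
        have e : rb + 1 - q + (j - i) + q = rb + 1 + (j - i) := by omega
        rwa [e] at this
      have e4 : w (rb + 1 - q) = w (rb + 1 - q + (j - i)) :=
        corr' (rb + 1 - q) (by omega) (by omega)
      have e5 : w (rb + 1) = w (rb + 1 + (j - i)) :=
        corr' (rb + 1) (by omega) (by omega)
      exact hright1 (by omega) (by rw [e4, e3, ← e5])
  have hij : i ≤ j := by omega
  omega
end

section
/- The word w_k = (0110)^k contains at least k-1 maximal gapped repeats with single-letter copies and period 3 (namely the pairs of 0's at distance 3: (w[4i], w[4i+3]) appropriately); more generally, for each period p with p ≡ 3 (mod 4) and p < 4k, w_k contains Θ(k) maximal gapped repeats with single-letter copies and period p, so for k = Ω(α), w_k contains Θ(α|w_k|) maximal α-gapped repeats. -/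
/-- The word `w_k = (0110)^k`, 1-based: position `t` carries letter `1` iff
`t % 4 ∈ {2, 3}`. -/
def wk (t : ℕ) : Bool := t % 4 = 2 || t % 4 = 3

/-! For `p ≡ 3 (mod 4)`, the `0` opening each block `0110` at position `4t + 1` and the `0`
closing a later block at position `4t + 1 + p` form a maximal repeat: their left neighbours
are `0` and `1`, their right neighbours `1` and `0`. The second position stays inside the word
for every `t < k - ⌈p/4⌉`. -/

/-- Words are 1-based: `w` has length `n` and letters `w 1, …, w n`. -/
def IsMaximalSingleLetterRepeat {α : Type*} (w : ℕ → α) (n p i : ℕ) : Prop :=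
  i + p ≤ n ∧ w i = w (i + p) ∧
    (1 < i → w (i - 1) ≠ w (i + p - 1)) ∧ (i + p < n → w (i + 1) ≠ w (i + p + 1))

lemma wk_of_mod_four_eq_zero {t : ℕ} (h : t % 4 = 0) : wk t = false := by simp [wk, h]

lemma wk_of_mod_four_eq_one {t : ℕ} (h : t % 4 = 1) : wk t = false := by simp [wk, h]

lemma wk_of_mod_four_eq_two {t : ℕ} (h : t % 4 = 2) : wk t = true := by simp [wk, h]

lemma wk_of_mod_four_eq_three {t : ℕ} (h : t % 4 = 3) : wk t = true := by simp [wk, h]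

lemma isMaximalSingleLetterRepeat_wk {k p t : ℕ} (hp : p % 4 = 3) (ht : 4 * t + 1 + p ≤ 4 * k) :
    IsMaximalSingleLetterRepeat wk (4 * k) p (4 * t + 1) := by
  refine ⟨ht, ?_, fun _ => ?_, fun _ => ?_⟩
  · rw [wk_of_mod_four_eq_one (by omega), wk_of_mod_four_eq_zero (by omega)]
  · rw [wk_of_mod_four_eq_zero (by omega), wk_of_mod_four_eq_three (by omega)]
    decide
  · rw [wk_of_mod_four_eq_two (by omega), wk_of_mod_four_eq_one (by omega)]
    decide

theorem stmt16_general (k p : ℕ) (hp4 : p % 4 = 3) :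
    k - (p + 3) / 4 ≤
      ((Finset.Icc 1 (4 * k)).filter (fun i =>
        i + p ≤ 4 * k ∧ wk i = wk (i + p) ∧
        (1 < i → wk (i - 1) ≠ wk (i + p - 1)) ∧
        (i + p < 4 * k → wk (i + 1) ≠ wk (i + p + 1)))).card := by
  calc k - (p + 3) / 4 = (Finset.range (k - (p + 3) / 4)).card := (Finset.card_range _).symm
    _ ≤ _ := by
      refine Finset.card_le_card_of_injOn (fun t => 4 * t + 1) (fun t ht => ?_)
        (fun a _ b _ h => by simp only at h; omega)
      have ht : 4 * t + 1 + p ≤ 4 * k := by simp at ht; omega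
      simp only [Finset.coe_filter, Set.mem_ofPred_eq, Finset.mem_Icc]
      exact ⟨⟨by omega, by omega⟩, isMaximalSingleLetterRepeat_wk hp4 ht⟩

/-- For every integer `p` with `p ≡ 3 (mod 4)` and `3 ≤ p ≤ 4k - 1`, the number
of maximal gapped repeats of `w_k = (0110)^k` with copy length `1` and period
`p` is at least `k - ⌈p/4⌉`. -/
theorem stmt16 (k p : ℕ) (hp4 : p % 4 = 3) (hp3 : 3 ≤ p) (hpk : p ≤ 4 * k - 1) :
    k - (p + 3) / 4 ≤
      ((Finset.Icc 1 (4 * k)).filter (fun i =>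
        i + p ≤ 4 * k ∧ wk i = wk (i + p) ∧
        (1 < i → wk (i - 1) ≠ wk (i + p - 1)) ∧
        (i + p < 4 * k → wk (i + 1) ≠ wk (i + p + 1)))).card :=
  stmt16_general k p hp4
end

section
/- If r is a maximal repetition in a word w, then for every integer p that is a multiple of per(r) with |r|/2 < p ≤ |r| - 2·per(r), the pair (w[beg(r)..end(r)-p], w[beg(r)+p..end(r)]) is a maximal gapped repeat with period p whose copies are periodic. -/
lemma seg_iter {β : Type*} (w : ℕ → β) (a b q : ℕ)
    (hper : ∀ t, a ≤ t → t + q ≤ b → w t = w (t + q)) :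
    ∀ m t, a ≤ t → t + m * q ≤ b → w t = w (t + m * q) := by
  intro m
  induction m with
  | zero => simp
  | succ m ih =>
    intro t hat htb
    have hmq : t + m * q + q ≤ b := by
      have : (m + 1) * q = m * q + q := by ring
      omega
    have h1 : w t = w (t + m * q) := ih t hat (by omega)
    have h2 : w (t + m * q) = w (t + m * q + q) := hper _ (by omega) hmq
    have : t + (m + 1) * q = t + m * q + q := by ring
    rw [this, h1, h2]

/-- If `r = w[ra..rb]` is a maximal repetition of `w[1..n]` with smallest period
`q`, then for every multiple `p` of `q` with `|r|/2 < p ≤ |r| - 2q`, the pair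
`(w[ra..rb-p], w[ra+p..rb])` is a maximal gapped repeat with period `p` whose
copies are periodic (exponent at least 2). -/
theorem stmt17 {β : Type*} (w : ℕ → β) (n ra rb q p : ℕ)
    (hr : MaxRepetition w n ra rb q)
    (hdvd : q ∣ p)
    (hlow : rb + 1 - ra < 2 * p)
    (hhigh : p + 2 * q ≤ rb + 1 - ra) :
    IsMaxGappedRepeat w n ra (ra + p) (rb + 1 - ra - p) ∧
    ∃ p', 0 < p' ∧ 2 * p' ≤ rb + 1 - ra - p ∧
      ∀ t, t + p' < rb + 1 - ra - p → w (ra + t) = w (ra + (t + p')) := by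
  obtain ⟨ha, hbn, ⟨⟨hq0, hqle, hper⟩, hmin⟩, h2q, hleft, hright⟩ := hr
  obtain ⟨k, hk⟩ := hdvd
  rw [mul_comm] at hk
  have key := seg_iter w ra rb q hper
  have harb : ra + 2 * q ≤ rb + 1 := by omega
  have hp0 : 0 < p := by omega
  have hk1 : 1 ≤ k := by
    rcases Nat.eq_zero_or_pos k with h | h
    · subst h; omega
    · exact h
  constructor
  · refine ⟨⟨ha, by omega, by omega, by omega, ?_⟩, ?_, ?_⟩
    · intro t ht
      have := key k (ra + t) (by omega) (by omega)
      rw [← hk] at this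
      convert this using 2
      omega
    · intro h1 heq
      apply hleft h1
      rw [heq]
      have := key (k - 1) (ra - 1 + q) (by omega) (by
        have : (k - 1) * q = k * q - q := by
          cases k with
          | zero => omega
          | succ k => simp [Nat.succ_sub_one]; ring_nf; omega
        omega)
      rw [this]
      congr 1
      have : (k - 1) * q = k * q - q := by
        cases k with
        | zero => omega
        | succ k => simp [Nat.succ_sub_one]; ring_nf; omega
      omega
    · intro h1 heq
      have hj : ra + p + (rb + 1 - ra - p) = rb + 1 := by omega
      apply hright (by omega)
      have := key (k - 1) (rb + 1 - p) (by omega) (by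
        have : (k - 1) * q = k * q - q := by
          cases k with
          | zero => omega
          | succ k => simp [Nat.succ_sub_one]; ring_nf; omega
        omega)
      have h2 : rb + 1 - q = rb + 1 - p + (k - 1) * q := by
        have : (k - 1) * q = k * q - q := by
          cases k with
          | zero => omega
          | succ k => simp [Nat.succ_sub_one]; ring_nf; omega
        omega
      rw [h2, ← this]
      have h3 : ra + (rb + 1 - ra - p) = rb + 1 - p := by omega
      rw [h3] at heq
      rw [heq, hj]
  · refine ⟨q, hq0, by omega, ?_⟩
    intro t ht
    have := hper (ra + t) (by omega) (by omega)
    rw [this]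
    congr 1
    omega
end
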